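/- (Theorem 3.1, equation (3.8): boundary-layer limit) Define A : [−1, 1] → ℝ by A(r) = tanh(β(λ/2)((1 + r)² − 1)) for r ∈ [−1, 0] and A(r) = tanh(β(λ/2)(1 − (1 − r)²)) for r ∈ (0, 1]. Then for every r ∈ [−1, 1] and every ε > 0 there exists L > 4 such that for every ℓ > L and every stationary solution (j, m) on [0, ℓ], one has |m(ℓ/2 + r) − A(r)| < ε. -/

import Mathlib

open Real Set

/-- The force profile `g(x) = ∫_{x-1}^x 1_{y ≤ ℓ/2} dy − ∫_x^{x+1} 1_{y ≤ ℓ/2} dy`. -/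
noncomputable def gfun (ℓ : ℝ) (x : ℝ) : ℝ :=
  (∫ y in (x - 1)..x, if y ≤ ℓ / 2 then (1 : ℝ) else 0) -
  (∫ y in x..(x + 1), if y ≤ ℓ / 2 then (1 : ℝ) else 0)

/-- An IVP solution with parameter `j`: a differentiable `m` on `[0, ℓ]` with `m 0 = 0`
and `m'(x) = -2j + βλ(1 - m(x)²) g(x)` on `[0, ℓ]`. -/
def IsIVPSolution (β lam ℓ j : ℝ) (m : ℝ → ℝ) : Prop :=
  m 0 = 0 ∧ ∀ x ∈ Icc (0 : ℝ) ℓ,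
    HasDerivAt m (-2 * j + β * lam * (1 - m x ^ 2) * gfun ℓ x) x

/-- A stationary solution: an IVP solution which also satisfies `m ℓ = 0`. -/
def IsStationarySolution (β lam ℓ j : ℝ) (m : ℝ → ℝ) : Prop :=
  IsIVPSolution β lam ℓ j m ∧ m ℓ = 0

/-- The boundary-layer limit profile `A` of (3.8). -/
noncomputable def Aprof (β lam : ℝ) (r : ℝ) : ℝ :=
  if r ≤ 0 then Real.tanh (β * (lam / 2) * ((1 + r) ^ 2 - 1))
  else Real.tanh (β * (lam / 2) * (1 - (1 - r) ^ 2))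

/-!
Outside the weld `|x - ℓ/2| ≤ 1` the force `g` vanishes, so `m` has slope `-2j` there and
`m (ℓ/2 ∓ 1) = ∓ j (ℓ - 2)`. On the weld, comparison with the supersolution
`tanh ((βλ + 1) (x - ℓ/2 + 1))` and the symmetry `m ↦ -m (ℓ - ·)` give
`|m| ≤ tanh (2 (βλ + 1)) < 1` uniformly in `ℓ`, hence `j = O(1/ℓ)`. Then
`w = artanh m - βλ H(x - ℓ/2)`, where `H t = t - t|t|/2` is the odd primitive of the tent `1 - |t|`,
has derivative `-2j / (1 - m²) = O(1/ℓ)` and opposite values at the two ends of the weld, so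
`w = O(1/ℓ)` and `m (ℓ/2 + r) = tanh (βλ H r + w) = A r + O(1/ℓ)`.
-/

open Topology Asymptotics MeasureTheory

namespace Real

theorem hasDerivAt_tanh (x : ℝ) : HasDerivAt tanh (1 - tanh x ^ 2) x := by
  have h := (hasDerivAt_sinh x).div (hasDerivAt_cosh x) (cosh_pos x).ne'
  rw [show sinh / cosh = tanh from funext fun y => (tanh_eq_sinh_div_cosh y).symm] at h
  refine h.congr_deriv ?_
  rw [tanh_eq_sinh_div_cosh]
  field_simp

theorem strictMono_tanh : StrictMono tanh :=
  strictMono_of_hasDerivAt_pos hasDerivAt_tanh fun x => sub_pos.2 (tanh_sq_lt_one x)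

theorem abs_tanh_sub_tanh_le (x y : ℝ) : |tanh x - tanh y| ≤ |x - y| := by
  have hbound (z : ℝ) (_ : z ∈ univ) : ‖1 - tanh z ^ 2‖ ≤ 1 := by
    rw [norm_eq_abs, abs_le]
    constructor <;> nlinarith [tanh_sq_lt_one z, sq_nonneg (tanh z)]
  simpa using Convex.norm_image_sub_le_of_norm_hasDerivWithin_le
    (fun z _ => (hasDerivAt_tanh z).hasDerivWithinAt) hbound convex_univ (mem_univ y) (mem_univ x)

theorem artanh_neg_eq_neg_artanh (x : ℝ) : artanh (-x) = -artanh x := by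
  rw [artanh, artanh, ← log_inv, ← sqrt_inv, inv_div, sub_neg_eq_add, ← sub_eq_add_neg]

theorem hasDerivAt_artanh {x : ℝ} (hx : x ∈ Ioo (-1) 1) :
    HasDerivAt artanh (1 - x ^ 2)⁻¹ x := by
  have h1 : 0 < 1 + x := by linarith [hx.1]
  have h2 : 0 < 1 - x := by linarith [hx.2]
  have hlog := ((((hasDerivAt_id' x).const_add 1).div ((hasDerivAt_id' x).const_sub 1)
    h2.ne').log (div_pos h1 h2).ne').const_mul (1 / 2)
  simp only [Pi.div_apply] at hlog
  have heq : (fun y => 1 / 2 * log ((1 + y) / (1 - y))) =ᶠ[𝓝 x] artanh := by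
    filter_upwards [Ioo_mem_nhds hx.1 hx.2] with y hy
    exact (artanh_eq_half_log (Ioo_subset_Icc_self hy)).symm
  refine (hlog.congr_of_eventuallyEq heq.symm).congr_deriv ?_
  rw [show 1 - x ^ 2 = (1 + x) * (1 - x) by ring]
  field_simp
  ring

end Real

theorem hasDerivAt_mul_abs (x : ℝ) : HasDerivAt (fun t => t * |t|) (2 * |x|) x := by
  rcases eq_or_ne x 0 with rfl | hx
  · have habs : (fun t : ℝ => |t|) =o[𝓝 0] fun _ => (1 : ℝ) :=
      (isLittleO_one_iff ℝ).2 (by simpa using continuous_abs.tendsto (0 : ℝ))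
    rw [hasDerivAt_iff_isLittleO_nhds_zero]
    simpa using (isBigO_refl (fun t : ℝ => t) (𝓝 0)).mul_isLittleO habs
  · refine ((hasDerivAt_id' x).mul (hasDerivAt_abs hx)).congr_deriv ?_
    rw [self_mul_sign]
    ring

noncomputable def tentPrimitive (t : ℝ) : ℝ := t - t * |t| / 2

theorem hasDerivAt_tentPrimitive (t : ℝ) : HasDerivAt tentPrimitive (1 - |t|) t :=
  ((hasDerivAt_id' t).sub ((hasDerivAt_mul_abs t).div_const 2)).congr_deriv (by ring)

theorem Aprof_eq_tanh_tentPrimitive (β lam r : ℝ) :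
    Aprof β lam r = tanh (β * lam * tentPrimitive r) := by
  unfold Aprof tentPrimitive
  split_ifs with hr
  · rw [abs_of_nonpos hr]; ring_nf
  · rw [abs_of_pos (not_le.1 hr)]; ring_nf

theorem integral_ite_le_one_zero {a b : ℝ} (c : ℝ) (hab : a ≤ b) :
    (∫ y in a..b, if y ≤ c then (1 : ℝ) else 0) = min b c - min a c := by
  have hind : (fun y => if y ≤ c then (1 : ℝ) else 0) = (Iic c).indicator 1 := by
    ext y; simp [indicator_apply]
  have hinter : Iic c ∩ Ioc a b = Ioc a (min b c) := by
    ext y; simp only [mem_inter_iff, mem_Iic, mem_Ioc, le_min_iff]; tauto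
  rw [intervalIntegral.integral_of_le hab, hind, integral_indicator_one measurableSet_Iic,
    measureReal_restrict_apply measurableSet_Iic, hinter, volume_real_Ioc]
  simp only [min_def, max_def]
  split_ifs <;> linarith

theorem gfun_eq (ℓ x : ℝ) : gfun ℓ x = max 0 (1 - |x - ℓ / 2|) := by
  rw [gfun, integral_ite_le_one_zero _ (by linarith), integral_ite_le_one_zero _ (by linarith)]
  simp only [min_def, max_def, abs_eq_max_neg]
  split_ifs <;> linarith

theorem gfun_nonneg (ℓ x : ℝ) : 0 ≤ gfun ℓ x := gfun_eq ℓ x ▸ le_max_left _ _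

theorem gfun_le_one (ℓ x : ℝ) : gfun ℓ x ≤ 1 := by
  rw [gfun_eq]
  exact max_le zero_le_one (by linarith [abs_nonneg (x - ℓ / 2)])

theorem gfun_eq_zero {ℓ x : ℝ} (h : 1 ≤ |x - ℓ / 2|) : gfun ℓ x = 0 := by
  rw [gfun_eq, max_eq_left (by linarith)]

theorem gfun_eq_of_abs_le {ℓ x : ℝ} (h : |x - ℓ / 2| ≤ 1) : gfun ℓ x = 1 - |x - ℓ / 2| := by
  rw [gfun_eq, max_eq_right (by linarith)]

theorem gfun_self_sub (ℓ x : ℝ) : gfun ℓ (ℓ - x) = gfun ℓ x := by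
  rw [gfun_eq, gfun_eq, ← abs_neg (x - ℓ / 2)]
  ring_nf

theorem image_le_of_hasDerivAt_lt_boundary {f f' B B' : ℝ → ℝ} {a b : ℝ}
    (hf : ∀ x ∈ Icc a b, HasDerivAt f (f' x) x) (hB : ∀ x ∈ Icc a b, HasDerivAt B (B' x) x)
    (ha : f a ≤ B a) (bound : ∀ x ∈ Ico a b, f x = B x → f' x < B' x) :
    ∀ ⦃x⦄, x ∈ Icc a b → f x ≤ B x :=
  image_le_of_deriv_right_lt_deriv_boundary'
    (fun x hx => (hf x hx).continuousAt.continuousWithinAt)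
    (fun x hx => (hf x (Ico_subset_Icc_self hx)).hasDerivWithinAt) ha
    (fun x hx => (hB x hx).continuousAt.continuousWithinAt)
    (fun x hx => (hB x (Ico_subset_Icc_self hx)).hasDerivWithinAt) bound

/-- With `w a = -w b`, the mean value bounds from both endpoints add up to `2 |w x|`. -/
theorem two_mul_abs_le_of_eq_neg {w w' : ℝ → ℝ} {a b C : ℝ}
    (hw : ∀ x ∈ Icc a b, HasDerivAt w (w' x) x) (hC : ∀ x ∈ Icc a b, |w' x| ≤ C)
    (hab : w a = -w b) {x : ℝ} (hx : x ∈ Icc a b) : 2 * |w x| ≤ C * (b - a) := by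
  have hmvt {y z : ℝ} (hy : y ∈ Icc a b) (hz : z ∈ Icc a b) : |w z - w y| ≤ C * |z - y| :=
    Convex.norm_image_sub_le_of_norm_hasDerivWithin_le (fun x hx => (hw x hx).hasDerivWithinAt)
      hC (convex_Icc a b) hy hz
  have hleft := hmvt (left_mem_Icc.2 (hx.1.trans hx.2)) hx
  have hright := hmvt hx (right_mem_Icc.2 (hx.1.trans hx.2))
  rw [abs_of_nonneg (sub_nonneg.2 hx.1), abs_le] at hleft
  rw [abs_of_nonneg (sub_nonneg.2 hx.2), abs_le] at hright
  rcases abs_cases (w x) with ⟨h, _⟩ | ⟨h, _⟩ <;> rw [h] <;> nlinarith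

theorem Icc_half_sub_one_subset {ℓ : ℝ} (hℓ : 2 ≤ ℓ) :
    Icc (ℓ / 2 - 1) (ℓ / 2 + 1) ⊆ Icc 0 ℓ :=
  Icc_subset_Icc (by linarith) (by linarith)

section StationarySolution

variable {β lam ℓ j : ℝ} {m : ℝ → ℝ}

theorem IsIVPSolution.apply_half_sub_one (hsol : IsIVPSolution β lam ℓ j m) (hℓ : 2 ≤ ℓ) :
    m (ℓ / 2 - 1) = -(j * (ℓ - 2)) := by
  have hderiv : ∀ x ∈ Icc 0 (ℓ / 2 - 1), HasDerivAt (fun y => m y + 2 * j * y) 0 x := by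
    intro x hx
    have hg : gfun ℓ x = 0 :=
      gfun_eq_zero (by rw [abs_of_nonpos (by linarith [hx.2])]; linarith [hx.2])
    refine ((hsol.2 x ⟨hx.1, by linarith [hx.2]⟩).add
      ((hasDerivAt_id' x).const_mul (2 * j))).congr_deriv ?_
    rw [hg]
    ring
  have hconst := constant_of_has_deriv_right_zero
    (fun x hx => (hderiv x hx).continuousAt.continuousWithinAt)
    (fun x hx => (hderiv x (Ico_subset_Icc_self hx)).hasDerivWithinAt)
    (ℓ / 2 - 1) (right_mem_Icc.2 (by linarith))
  simp only [hsol.1] at hconst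
  linarith

theorem IsStationarySolution.reflect (hsol : IsStationarySolution β lam ℓ j m) :
    IsStationarySolution β lam ℓ j (fun x => -m (ℓ - x)) := by
  obtain ⟨⟨hm0, hm⟩, hmℓ⟩ := hsol
  refine ⟨⟨by simp [hmℓ], fun x hx => ?_⟩, by simp [hm0]⟩
  have hD := hm (ℓ - x) ⟨by linarith [hx.2], by linarith [hx.1]⟩
  refine (hD.comp x ((hasDerivAt_id' x).const_sub ℓ)).neg.congr_deriv ?_
  rw [gfun_self_sub]
  ring

theorem IsStationarySolution.apply_half_add_one (hsol : IsStationarySolution β lam ℓ j m)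
    (hℓ : 2 ≤ ℓ) : m (ℓ / 2 + 1) = j * (ℓ - 2) := by
  have h := hsol.reflect.1.apply_half_sub_one hℓ
  rw [show ℓ - (ℓ / 2 - 1) = ℓ / 2 + 1 by ring] at h
  linarith

/-- A negative `j` would keep `m` positive across the weld, against `m (ℓ/2 + 1) = j (ℓ - 2)`. -/
theorem IsStationarySolution.nonneg (hβlam : 0 ≤ β * lam) (hℓ : 2 < ℓ)
    (hsol : IsStationarySolution β lam ℓ j m) : 0 ≤ j := by
  by_contra! hj
  have hpos := image_le_of_hasDerivAt_lt_boundary (f := fun x => -m x) (B := fun _ => 0)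
    (fun x hx => (hsol.1.2 x (Icc_half_sub_one_subset hℓ.le hx)).neg)
    (fun x _ => hasDerivAt_const x 0) ?_ ?_ (right_mem_Icc.2 (by linarith))
  · simp only [hsol.apply_half_add_one hℓ.le] at hpos
    nlinarith
  · simp only [hsol.1.apply_half_sub_one hℓ.le]
    nlinarith
  · intro x _ hx
    have hmx : m x = 0 := by linarith
    rw [hmx]
    nlinarith [gfun_nonneg ℓ x]

theorem IsIVPSolution.le_tanh (hβlam : 0 ≤ β * lam) (hℓ : 2 ≤ ℓ) (hj : 0 ≤ j)
    (hsol : IsIVPSolution β lam ℓ j m) {x : ℝ} (hx : x ∈ Icc (ℓ / 2 - 1) (ℓ / 2 + 1)) :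
    m x ≤ tanh (2 * (β * lam + 1)) := by
  set B : ℝ → ℝ := fun y => tanh ((β * lam + 1) * (y - (ℓ / 2 - 1)))
  have hB (y : ℝ) : HasDerivAt B ((1 - B y ^ 2) * ((β * lam + 1) * 1)) y :=
    (hasDerivAt_tanh _).comp y (((hasDerivAt_id' y).sub_const _).const_mul _)
  have hmB := image_le_of_hasDerivAt_lt_boundary
    (fun y hy => hsol.2 y (Icc_half_sub_one_subset hℓ hy)) (fun y _ => hB y) ?_ ?_ hx
  · refine hmB.trans (strictMono_tanh.monotone ?_)
    nlinarith [hx.2]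
  · simp only [B, hsol.apply_half_sub_one hℓ, sub_self, mul_zero, tanh_zero]
    nlinarith
  · intro y _ hy
    have hBy : 0 < 1 - B y ^ 2 := sub_pos.2 (tanh_sq_lt_one _)
    rw [hy]
    nlinarith [mul_le_mul_of_nonneg_left (gfun_le_one ℓ y) (mul_nonneg hβlam hBy.le)]

theorem IsStationarySolution.abs_le_tanh (hβlam : 0 ≤ β * lam) (hℓ : 2 < ℓ)
    (hsol : IsStationarySolution β lam ℓ j m) {x : ℝ} (hx : x ∈ Icc (ℓ / 2 - 1) (ℓ / 2 + 1)) :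
    |m x| ≤ tanh (2 * (β * lam + 1)) := by
  have hj := hsol.nonneg hβlam hℓ
  have hreflect := hsol.reflect.1.le_tanh hβlam hℓ.le hj
    (x := ℓ - x) ⟨by linarith [hx.2], by linarith [hx.1]⟩
  simp only [sub_sub_cancel] at hreflect
  exact abs_le.2 ⟨by linarith, hsol.1.le_tanh hβlam hℓ.le hj hx⟩

theorem IsIVPSolution.hasDerivAt_artanh_sub_tentPrimitive (hsol : IsIVPSolution β lam ℓ j m)
    (hℓ : 2 ≤ ℓ) {x : ℝ} (hx : x ∈ Icc (ℓ / 2 - 1) (ℓ / 2 + 1)) (hmx : m x ∈ Ioo (-1) 1) :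
    HasDerivAt (fun y => artanh (m y) - β * lam * tentPrimitive (y - ℓ / 2))
      (-2 * j / (1 - m x ^ 2)) x := by
  have hgx : gfun ℓ x = 1 - |x - ℓ / 2| :=
    gfun_eq_of_abs_le (abs_le.2 ⟨by linarith [hx.1], by linarith [hx.2]⟩)
  have hartanh := (hasDerivAt_artanh hmx).comp x (hsol.2 x (Icc_half_sub_one_subset hℓ hx))
  have htent := (hasDerivAt_tentPrimitive _).comp x ((hasDerivAt_id' x).sub_const (ℓ / 2))
  refine (hartanh.sub (htent.const_mul (β * lam))).congr_deriv ?_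
  have : 1 - m x ^ 2 ≠ 0 := by nlinarith [hmx.1, hmx.2]
  rw [hgx]
  field_simp
  ring

theorem IsStationarySolution.abs_sub_Aprof_le (hβlam : 0 ≤ β * lam) (hℓ : 2 < ℓ)
    (hsol : IsStationarySolution β lam ℓ j m) {r : ℝ} (hr : r ∈ Icc (-1) 1) :
    |m (ℓ / 2 + r) - Aprof β lam r| ≤ 2 * |j| / (1 - tanh (2 * (β * lam + 1)) ^ 2) := by
  set M := tanh (2 * (β * lam + 1))
  have hδ : 0 < 1 - M ^ 2 := sub_pos.2 (tanh_sq_lt_one _)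
  have hm (x : ℝ) (hx : x ∈ Icc (ℓ / 2 - 1) (ℓ / 2 + 1)) : m x ^ 2 ≤ M ^ 2 := by
    simpa only [sq_abs] using pow_le_pow_left₀ (abs_nonneg _) (hsol.abs_le_tanh hβlam hℓ hx) 2
  have hmIoo (x : ℝ) (hx : x ∈ Icc (ℓ / 2 - 1) (ℓ / 2 + 1)) : m x ∈ Ioo (-1) 1 :=
    abs_lt.1 ((hsol.abs_le_tanh hβlam hℓ hx).trans_lt (tanh_lt_one _))
  set w : ℝ → ℝ := fun x => artanh (m x) - β * lam * tentPrimitive (x - ℓ / 2)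
  have hC (x : ℝ) (hx : x ∈ Icc (ℓ / 2 - 1) (ℓ / 2 + 1)) :
      |-2 * j / (1 - m x ^ 2)| ≤ 2 * |j| / (1 - M ^ 2) := by
    rw [abs_div, abs_mul, abs_neg, abs_two, abs_of_pos (by nlinarith [hm x hx] : 0 < 1 - m x ^ 2)]
    exact div_le_div_of_nonneg_left (by positivity) hδ (by linarith [hm x hx])
  have hends : w (ℓ / 2 - 1) = -w (ℓ / 2 + 1) := by
    simp only [w, hsol.1.apply_half_sub_one hℓ.le, hsol.apply_half_add_one hℓ.le,
      artanh_neg_eq_neg_artanh, tentPrimitive]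
    rw [show ℓ / 2 - 1 - ℓ / 2 = -1 by ring, show ℓ / 2 + 1 - ℓ / 2 = 1 by ring, abs_neg, abs_one]
    ring
  have hr' : ℓ / 2 + r ∈ Icc (ℓ / 2 - 1) (ℓ / 2 + 1) := ⟨by linarith [hr.1], by linarith [hr.2]⟩
  have hwr := two_mul_abs_le_of_eq_neg
    (fun x hx => hsol.1.hasDerivAt_artanh_sub_tentPrimitive hℓ.le hx (hmIoo x hx)) hC hends hr'
  have hmr : m (ℓ / 2 + r) = tanh (w (ℓ / 2 + r) + β * lam * tentPrimitive r) := by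
    simp only [w, add_sub_cancel_left, sub_add_cancel]
    exact (tanh_artanh (hmIoo _ hr')).symm
  rw [Aprof_eq_tanh_tentPrimitive, hmr]
  refine (abs_tanh_sub_tanh_le _ _).trans ?_
  rw [add_sub_cancel_right]
  linarith

end StationarySolution

/-- Theorem 3.1, (3.8): as `l → ∞` the stationary profile near the weld converges to `A`. -/
theorem stationary_blayer_limit (β lam : ℝ) (hβ : 0 < β) (hlam : 0 < lam) :
    ∀ r ∈ Icc (-1 : ℝ) 1, ∀ ε > (0 : ℝ), ∃ L > (4 : ℝ), ∀ ℓ > L,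
      ∀ j : ℝ, ∀ m : ℝ → ℝ, IsStationarySolution β lam ℓ j m →
        |m (ℓ / 2 + r) - Aprof β lam r| < ε := by
  intro r hr ε hε
  have hβlam : 0 ≤ β * lam := (mul_pos hβ hlam).le
  set δ := 1 - tanh (2 * (β * lam + 1)) ^ 2
  have hδ : 0 < δ := sub_pos.2 (tanh_sq_lt_one _)
  refine ⟨4 + 2 / (δ * ε), by linarith [show 0 < 2 / (δ * ε) by positivity], ?_⟩
  intro ℓ hℓ j m hsol
  have hℓ2 : 2 < ℓ := by linarith [show 0 < 2 / (δ * ε) by positivity]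
  have hj : |j| * (ℓ - 2) < 1 := by
    have h := hsol.abs_le_tanh hβlam hℓ2 (x := ℓ / 2 + 1) ⟨by linarith, le_rfl⟩
    rw [hsol.apply_half_add_one hℓ2.le, abs_mul, abs_of_pos (by linarith : 0 < ℓ - 2)] at h
    exact h.trans_lt (tanh_lt_one _)
  refine (hsol.abs_sub_Aprof_le hβlam hℓ2 hr).trans_lt ((div_lt_iff₀ hδ).2 ?_)
  calc 2 * |j| = 2 / (δ * ε) * |j| * (δ * ε) := by field_simp
    _ ≤ (ℓ - 2) * |j| * (δ * ε) := by gcongr; linarith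
    _ < 1 * (δ * ε) := by gcongr; linarith
    _ = ε * δ := by ring
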